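/- arXiv:2302.12029 — 2 statements merged into one kernel-verified Lean document; each statement's English description precedes it below -/
import Mathlib

section
/- For all integers n ≥ 2, (1/(n-1)) · Σ_{i=0}^{n-2} (1 + (n-1)/(2n-2-i)) ≤ 1 + ln(2). -/
open Finset

lemma aux_log_sum (m p : ℕ) (hm : 1 ≤ m) :
    ∑ i ∈ range p, (1 : ℝ) / (m + i + 1) ≤ Real.log (m + p) - Real.log m := by
  induction p with
  | zero => simp
  | succ p ih =>
    rw [sum_range_succ]
    have hmR : (1:ℝ) ≤ m := by exact_mod_cast hm
    have h1 : (0:ℝ) < m + p := by positivity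
    have h2 : (0:ℝ) < m + p + 1 := by positivity
    have key : (1:ℝ) / (m + p + 1) ≤ Real.log (m + p + 1) - Real.log (m + p) := by
      have hx : (0:ℝ) < (m + p) / (m + p + 1) := by positivity
      have := Real.log_le_sub_one_of_pos hx
      rw [Real.log_div (ne_of_gt h1) (ne_of_gt h2)] at this
      have heq : ((m:ℝ) + p) / (m + p + 1) - 1 = -(1 / (m + p + 1)) := by
        field_simp
        ring
      rw [heq] at this
      linarith
    push_cast
    push_cast at ih
    have he : (m:ℝ) + (p + 1) = (m:ℝ) + p + 1 := by ring
    rw [he]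
    linarith

theorem stmt_0 (n : ℕ) (hn : 2 ≤ n) :
    (1 / ((n : ℝ) - 1)) *
      ∑ i ∈ Finset.range (n - 1), (1 + ((n : ℝ) - 1) / (2 * (n : ℝ) - 2 - (i : ℝ)))
      ≤ 1 + Real.log 2 := by
  obtain ⟨m, rfl⟩ : ∃ m, n = m + 1 := ⟨n - 1, by omega⟩
  have hm : 1 ≤ m := by omega
  have hmR : (1:ℝ) ≤ m := by exact_mod_cast hm
  have hm0 : (0:ℝ) < m := by linarith
  have hre : ∑ i ∈ range m, (1:ℝ)/(2*m - i) = ∑ i ∈ range m, (1:ℝ)/(m + i + 1) := by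
    rw [← Finset.sum_range_reflect (fun j => (1:ℝ)/(m + j + 1)) m]
    apply Finset.sum_congr rfl
    intro i hi
    simp only [mem_range] at hi
    have h' : m - 1 - i = m - (1 + i) := by omega
    rw [h', Nat.cast_sub (by omega)]
    push_cast
    ring_nf
  have hsum : ∑ i ∈ range m, (1:ℝ)/(2*m - i) ≤ Real.log 2 := by
    have h := aux_log_sum m m hm
    have hlog : Real.log ((m:ℝ) + m) = Real.log 2 + Real.log m := by
      rw [show (m:ℝ) + m = 2 * m by ring, Real.log_mul (by norm_num) (ne_of_gt hm0)]
    rw [hlog] at h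
    rw [hre]
    linarith
  have hsimp : ∑ i ∈ range m, (1 + ((m:ℝ) + 1 - 1) / (2 * ((m:ℝ)+1) - 2 - i))
      = m + m * ∑ i ∈ range m, (1:ℝ)/(2*m - i) := by
    rw [Finset.mul_sum, Finset.sum_add_distrib]
    simp only [Finset.sum_const, Finset.card_range, nsmul_eq_mul, mul_one]
    congr 1
    apply Finset.sum_congr rfl
    intro i hi
    rw [mul_one_div]
    ring_nf
  push_cast
  rw [show (m:ℝ) + 1 - 1 = (m:ℝ) by ring] at *
  rw [hsimp]
  have heq : 1 / (m:ℝ) * ((m:ℝ) + (m:ℝ) * ∑ i ∈ range m, (1:ℝ)/(2*m - i))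
      = 1 + ∑ i ∈ range m, (1:ℝ)/(2*m - i) := by
    field_simp
  rw [heq]
  linarith
end

section
/- For every real r < 2, there exist positive integers k > 1 and ℓ such that 2 - 2/(ℓ+1) ≥ r and the quantity (ℓ(2k+1)+1)/(ℓ+1) equals 1 + (2 - 2/(ℓ+1))·k; in particular, for cost Opt = ℓ+1, algorithm cost Alg = ℓ(2k+1)+1, and normalized error ε = k, we have Alg/Opt = 1 + (2 - 2/(ℓ+1))ε ≥ 1 + rε. -/
open Filter Topology

theorem exists_pos_nat_le_two_sub_two_div_succ {r : ℝ} (hr : r < 2) :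
    ∃ ℓ : ℕ, 0 < ℓ ∧ r ≤ 2 - 2 / ((ℓ : ℝ) + 1) := by
  have hlim : Tendsto (fun n : ℕ => 2 / ((n : ℝ) + 1)) atTop (𝓝 0) := by
    simpa [div_eq_mul_inv] using tendsto_one_div_add_atTop_nhds_zero_nat.const_mul (2 : ℝ)
  obtain ⟨ℓ, hsmall, hℓ⟩ :=
    ((hlim.eventually (gt_mem_nhds (sub_pos.2 hr))).and (eventually_gt_atTop 0)).exists
  exact ⟨ℓ, hℓ, by linarith⟩

theorem mul_two_mul_add_one_add_one_div_add_one {K : Type*} [Field K] {ℓ : K} (hℓ : ℓ + 1 ≠ 0)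
    (k : K) : (ℓ * (2 * k + 1) + 1) / (ℓ + 1) = 1 + (2 - 2 / (ℓ + 1)) * k := by
  field_simp
  ring

theorem stmt_11 (r : ℝ) (hr : r < 2) :
    ∃ k ℓ : ℕ, 1 < k ∧ 0 < ℓ ∧
      2 - 2 / ((ℓ : ℝ) + 1) ≥ r ∧
      ((ℓ : ℝ) * (2 * (k : ℝ) + 1) + 1) / ((ℓ : ℝ) + 1)
        = 1 + (2 - 2 / ((ℓ : ℝ) + 1)) * (k : ℝ) ∧
      ((ℓ : ℝ) * (2 * (k : ℝ) + 1) + 1) / ((ℓ : ℝ) + 1) ≥ 1 + r * (k : ℝ) := by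
  obtain ⟨ℓ, hℓ, hrℓ⟩ := exists_pos_nat_le_two_sub_two_div_succ hr
  have hratio := mul_two_mul_add_one_add_one_div_add_one (ℓ := (ℓ : ℝ)) (by positivity) (2 : ℕ)
  refine ⟨2, ℓ, one_lt_two, hℓ, hrℓ, hratio, ?_⟩
  rw [hratio]
  gcongr
end
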